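/- Let f : ℝ → ℂ be continuous and compactly supported, and suppose ∫_ℝ f(y) · y · e^{λ y} dy = 0 for all λ ∈ ℝ. Then ∫_ℝ f(y) y^k dy = 0 for all integers k ≥ 1. -/

import Mathlib

open MeasureTheory

private lemma key_deriv (g : ℝ → ℂ) (hg : Continuous g) (hs : HasCompactSupport g)
    (lam : ℝ) :
    HasDerivAt (fun l : ℝ => ∫ y : ℝ, g y * Complex.exp ((l : ℂ) * (y : ℂ)))
      (∫ y : ℝ, g y * (y : ℂ) * Complex.exp ((lam : ℂ) * (y : ℂ))) lam := by
  have cont_exp : ∀ l : ℝ, Continuous fun y : ℝ => Complex.exp ((l : ℂ) * (y : ℂ)) := by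
    intro l
    exact Complex.continuous_exp.comp (continuous_const.mul Complex.continuous_ofReal)
  have int_F : ∀ l : ℝ, Integrable (fun y : ℝ => g y * Complex.exp ((l : ℂ) * (y : ℂ))) := by
    intro l
    exact ((hg.mul (cont_exp l)).integrable_of_hasCompactSupport (hs.mul_right))
  set bound : ℝ → ℝ := fun y => ‖g y‖ * (|y| * Real.exp ((|lam| + 1) * |y|)) with hbound
  have bound_cont : Continuous bound := by
    apply hg.norm.mul
    exact (continuous_abs.mul (Real.continuous_exp.comp (continuous_const.mul continuous_abs)))
  have bound_supp : HasCompactSupport bound := hs.norm.mul_right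
  have bound_int : Integrable bound := bound_cont.integrable_of_hasCompactSupport bound_supp
  have hderiv : ∀ (y : ℝ) (l : ℝ),
      HasDerivAt (fun l' : ℝ => g y * Complex.exp ((l' : ℂ) * (y : ℂ)))
        (g y * (y : ℂ) * Complex.exp ((l : ℂ) * (y : ℂ))) l := by
    intro y l
    have h1 : HasDerivAt (fun l' : ℝ => ((l' : ℂ) * (y : ℂ))) (y : ℂ) l := by
      simpa using ((hasDerivAt_id (l : ℂ)).mul_const (y : ℂ)).comp_ofReal
    have h2 : HasDerivAt (fun l' : ℝ => Complex.exp ((l' : ℂ) * (y : ℂ)))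
        (Complex.exp ((l : ℂ) * (y : ℂ)) * (y : ℂ)) l := h1.cexp
    have := h2.const_mul (g y)
    convert this using 1
    · rfl
    ring
  have hb : ∀ y : ℝ, ∀ l ∈ Metric.ball lam 1,
      ‖g y * (y : ℂ) * Complex.exp ((l : ℂ) * (y : ℂ))‖ ≤ bound y := by
    intro y l hl
    rw [hbound]
    simp only [norm_mul, Complex.norm_real, Real.norm_eq_abs, Complex.norm_exp,
      Complex.mul_re, Complex.ofReal_re, Complex.ofReal_im, mul_zero, sub_zero, ← mul_assoc]
    have hly : l * y ≤ (|lam| + 1) * |y| := by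
      have hd := Metric.mem_ball.mp hl
      rw [Real.dist_eq] at hd
      have hll : |l| ≤ |lam| + 1 := by
        calc |l| = |lam + (l - lam)| := by ring_nf
          _ ≤ |lam| + |l - lam| := abs_add_le _ _
          _ ≤ |lam| + 1 := by linarith [le_of_lt hd]
      calc l * y ≤ |l * y| := le_abs_self _
        _ = |l| * |y| := abs_mul _ _
        _ ≤ (|lam| + 1) * |y| := by gcongr
    gcongr
  have main := hasDerivAt_integral_of_dominated_loc_of_deriv_le (μ := volume)
    (F := fun l : ℝ => fun y : ℝ => g y * Complex.exp ((l : ℂ) * (y : ℂ)))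
    (F' := fun l : ℝ => fun y : ℝ => g y * (y : ℂ) * Complex.exp ((l : ℂ) * (y : ℂ)))
    (x₀ := lam) (bound := bound) (Metric.ball_mem_nhds lam one_pos)
    (Filter.Eventually.of_forall fun l => ((hg.mul (cont_exp l)).aestronglyMeasurable))
    (int_F lam)
    (((hg.mul Complex.continuous_ofReal).mul (cont_exp lam)).aestronglyMeasurable)
    (Filter.Eventually.of_forall hb) bound_int
    (Filter.Eventually.of_forall fun y => fun l _ => hderiv y l)
  exact main.2

/-- If a compactly supported continuous f satisfies ∫ f(y) y e^{λy} dy = 0 for all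
real λ, then all its weighted moments ∫ f(y) y^k dy (k ≥ 1) vanish. -/
theorem stmt14 (f : ℝ → ℂ) (hf : Continuous f) (hc : HasCompactSupport f)
    (h : ∀ lam : ℝ, (∫ y : ℝ, f y * (y : ℂ) * Complex.exp ((lam : ℂ) * (y : ℂ))) = 0) :
    ∀ k : ℕ, 1 ≤ k → (∫ y : ℝ, f y * (y : ℂ) ^ k) = 0 := by
  have key : ∀ k : ℕ, 1 ≤ k →
      ∀ lam : ℝ, (∫ y : ℝ, f y * (y : ℂ) ^ k * Complex.exp ((lam : ℂ) * (y : ℂ))) = 0 := by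
    intro k hk
    induction k with
    | zero => omega
    | succ n ih =>
      rcases Nat.eq_or_lt_of_le hk with h1 | h1
      · intro lam
        have := h lam
        simpa [← h1, pow_one] using this
      · have hn : 1 ≤ n := by omega
        have ihn := ih hn
        intro lam
        set g : ℝ → ℂ := fun y => f y * (y : ℂ) ^ n with hgdef
        have hg : Continuous g := hf.mul (Complex.continuous_ofReal.pow n)
        have hgs : HasCompactSupport g := hc.mul_right
        have hd := key_deriv g hg hgs lam
        have hzero : (fun l : ℝ => ∫ y : ℝ, g y * Complex.exp ((l : ℂ) * (y : ℂ)))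
            = fun _ : ℝ => (0 : ℂ) := funext fun l => ihn l
        rw [hzero] at hd
        have := hd.unique (hasDerivAt_const lam (0 : ℂ))
        have heq : (∫ y : ℝ, g y * (y : ℂ) * Complex.exp ((lam : ℂ) * (y : ℂ)))
            = ∫ y : ℝ, f y * (y : ℂ) ^ (n + 1) * Complex.exp ((lam : ℂ) * (y : ℂ)) := by
          congr 1; funext y; rw [hgdef]; ring
        rw [← heq, this]
  intro k hk
  have := key k hk 0
  simpa using this
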